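/- arXiv:2401.01914 — 3 statements merged into one kernel-verified Lean document; each statement's English description precedes it below -/
import Mathlib

section
/- Let ℓ, v₀, v_r, δ, T > 0, let κ : ℝ → ℝ be continuously differentiable, T-periodic, and positive, and set 𝒦 := −2i·v_r²·δ/(ℓ·v₀). If c : ℝ → ℂ is twice differentiable and satisfies the capacitance ODE (2/v₀)·c'(t) + (ℓ/(δ·v_r²))·(d/dt)(c'(t)/κ(t)) = 0 for all t ∈ ℝ, then c'(T) = exp(−i·ω₁·T)·c'(0), where ω₁ := (𝒦/T)·∫₀ᵀ κ(t) dt. In other words, the Floquet quasifrequency of the non-constant solutions of the single-resonator capacitance ODE equals (𝒦/T)·∫₀ᵀ κ(t) dt. -/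
/-!
With `a = 2/v₀` and `b = ℓ/(δ v_r²)`, the ODE says `y := c'/κ` solves the scalar linear equation
`y' = -(a/b) κ y`, so `y(T) = exp(-(a/b) ∫₀ᵀ κ) y(0)`. Since `κ(T) = κ(0)`, the same multiplier
carries `c'(0)` to `c'(T)`, and `-(a/b) ∫₀ᵀ κ = -i ω₁ T`.
-/

open Complex intervalIntegral

theorem eq_cexp_integral_mul_of_hasDerivAt_mul {g F : ℝ → ℂ} (hg : Continuous g)
    (hF : ∀ t, HasDerivAt F (g t * F t) t) (a b : ℝ) :
    F b = exp (∫ t in a..b, g t) * F a := by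
  set G : ℝ → ℂ := fun t => exp (-∫ s in a..t, g s) * F t
  have hG : ∀ t, HasDerivAt G 0 t := fun t =>
    (((hg.integral_hasStrictDerivAt a t).hasDerivAt.neg.cexp).mul (hF t)).congr_deriv (by ring)
  have hGab : G b = G a := is_const_of_deriv_eq_zero (fun t => (hG t).differentiableAt)
    (fun t => (hG t).deriv) b a
  calc F b = exp (∫ t in a..b, g t) * G b := by simp [G, ← mul_assoc, ← exp_add]
    _ = exp (∫ t in a..b, g t) * F a := by simp [hGab, G]

theorem hasDerivAt_div_of_add_mul_deriv_div_eq_zero {a b : ℂ} (hb : b ≠ 0) {y : ℝ → ℂ}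
    {κ : ℝ → ℝ} (hy : Differentiable ℝ y) (hκ : Differentiable ℝ κ) (hκ0 : ∀ t, κ t ≠ 0)
    (h : ∀ t, a * y t + b * deriv (fun s => y s / κ s) t = 0) (t : ℝ) :
    HasDerivAt (fun s => y s / κ s) (-(a / b) * κ t * (y t / κ t)) t := by
  have hκt : (κ t : ℂ) ≠ 0 := by exact_mod_cast hκ0 t
  have hd : DifferentiableAt ℝ (fun s => y s / κ s) t :=
    (hy t).div (hκ t).hasDerivAt.ofReal_comp.differentiableAt hκt
  refine hd.hasDerivAt.congr_deriv ?_
  field_simp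
  linear_combination h t

theorem deriv_eq_cexp_integral_mul_of_add_mul_deriv_div_eq_zero {a b : ℂ} (hb : b ≠ 0)
    {c : ℝ → ℂ} {κ : ℝ → ℝ} {T : ℝ} (hc' : Differentiable ℝ (deriv c)) (hκ : ContDiff ℝ 1 κ)
    (hκ0 : ∀ t, κ t ≠ 0) (hκT : κ T = κ 0)
    (h : ∀ t, a * deriv c t + b * deriv (fun s => deriv c s / κ s) t = 0) :
    deriv c T = exp (-(a / b) * ∫ t in (0 : ℝ)..T, κ t) * deriv c 0 := by
  have hsol := eq_cexp_integral_mul_of_hasDerivAt_mul (by fun_prop)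
    (hasDerivAt_div_of_add_mul_deriv_div_eq_zero hb hc' (hκ.differentiable one_ne_zero) hκ0 h) 0 T
  rw [integral_const_mul, integral_ofReal, hκT] at hsol
  have hκ0' : (κ 0 : ℂ) ≠ 0 := by exact_mod_cast hκ0 0
  rwa [div_eq_iff hκ0', mul_assoc, div_mul_cancel₀ _ hκ0'] at hsol

theorem floquet_quasifrequency_single_resonator_general
    (ℓ v₀ vr δ T : ℝ) (hℓ : 0 < ℓ) (hvr : 0 < vr)
    (hδ : 0 < δ) (hT : 0 < T)
    (κ : ℝ → ℝ) (hκ : ContDiff ℝ 1 κ) (hper : ∀ t, κ (t + T) = κ t)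
    (hpos : ∀ t, 0 < κ t)
    (c : ℝ → ℂ) (hc' : Differentiable ℝ (deriv c))
    (hode : ∀ t, (2 / (v₀ : ℂ)) * deriv c t
        + ((ℓ : ℂ) / ((δ : ℂ) * (vr : ℂ) ^ 2)) *
            deriv (fun s => deriv c s / (κ s : ℂ)) t = 0) :
    deriv c T
      = Complex.exp (-Complex.I *
          (((-2 * Complex.I * (vr : ℂ) ^ 2 * (δ : ℂ) / ((ℓ : ℂ) * (v₀ : ℂ))) / (T : ℂ))
            * ((∫ t in (0:ℝ)..T, κ t : ℝ) : ℂ)) * (T : ℂ)) * deriv c 0 := by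
  have hb : (ℓ : ℂ) / ((δ : ℂ) * (vr : ℂ) ^ 2) ≠ 0 := by
    have hδ' : (δ : ℂ) ≠ 0 := by exact_mod_cast hδ.ne'
    have hvr' : (vr : ℂ) ≠ 0 := by exact_mod_cast hvr.ne'
    exact div_ne_zero (by exact_mod_cast hℓ.ne') (mul_ne_zero hδ' (pow_ne_zero 2 hvr'))
  rw [deriv_eq_cexp_integral_mul_of_add_mul_deriv_div_eq_zero hb hc' hκ (fun t => (hpos t).ne')
    (by simpa using hper 0) hode]
  have hT' : (T : ℂ) ≠ 0 := by exact_mod_cast hT.ne'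
  congr 2
  field_simp
  rw [I_sq]
  ring

/-- **Floquet quasifrequency of the single-resonator capacitance ODE.**
If `c` is twice differentiable and satisfies
`(2/v₀)·c'(t) + (ℓ/(δ·v_r²))·(d/dt)(c'(t)/κ(t)) = 0` with `κ` a `C¹`, `T`-periodic,
positive modulation, then `c'(T) = exp(−i·ω₁·T)·c'(0)` where
`ω₁ = (𝒦/T)·∫₀ᵀ κ` and `𝒦 = −2i·v_r²·δ/(ℓ·v₀)`. -/
theorem floquet_quasifrequency_single_resonator
    (ℓ v₀ vr δ T : ℝ) (hℓ : 0 < ℓ) (hv₀ : 0 < v₀) (hvr : 0 < vr)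
    (hδ : 0 < δ) (hT : 0 < T)
    (κ : ℝ → ℝ) (hκ : ContDiff ℝ 1 κ) (hper : ∀ t, κ (t + T) = κ t)
    (hpos : ∀ t, 0 < κ t)
    (c : ℝ → ℂ) (hc : Differentiable ℝ c) (hc' : Differentiable ℝ (deriv c))
    (hode : ∀ t, (2 / (v₀ : ℂ)) * deriv c t
        + ((ℓ : ℂ) / ((δ : ℂ) * (vr : ℂ) ^ 2)) *
            deriv (fun s => deriv c s / (κ s : ℂ)) t = 0) :
    deriv c T
      = Complex.exp (-Complex.I *
          (((-2 * Complex.I * (vr : ℂ) ^ 2 * (δ : ℂ) / ((ℓ : ℂ) * (v₀ : ℂ))) / (T : ℂ))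
            * ((∫ t in (0:ℝ)..T, κ t : ℝ) : ℂ)) * (T : ℂ)) * deriv c 0 :=
  floquet_quasifrequency_single_resonator_general ℓ v₀ vr δ T hℓ hvr hδ hT κ hκ hper hpos c hc' hode
end

section
/- Let ℓ, v₀, v_r, δ, Ω > 0, let 0 ≤ ε < 1, set T := 2π/Ω, κ(t) := 1/(1 + ε·cos(Ωt)), and 𝒦 := −2i·v_r²·δ/(ℓ·v₀). If c : ℝ → ℂ is twice differentiable and satisfies the capacitance ODE (2/v₀)·c'(t) + (ℓ/(δ·v_r²))·(d/dt)(c'(t)/κ(t)) = 0 for all t ∈ ℝ, then c'(T) = exp(−i·T·𝒦/√(1 − ε²))·c'(0); that is, the Floquet quasifrequency of the non-constant solutions equals 𝒦/√(1 − ε²). -/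
open Real

/-!
Put `w := (1 + ε cos Ωt) · c'`. The ODE says `w' = -β c' = -(β / (1 + ε cos Ωt)) · w` with
`β = (2/v₀) / (ℓ/(δ v_r²))`, so `w(T) = exp(-β ∫₀ᵀ dt / (1 + ε cos Ωt)) · w(0)`, and since the
modulation is `T`-periodic, `c'` picks up the same factor. A primitive of `1 / (1 + ε cos θ)` is
`E(θ) / √(1 - ε²)`, where `E` is the eccentric anomaly of a Kepler orbit of eccentricity `ε`;
`E` advances by exactly `2π` over a period, so the integral is `T / √(1 - ε²)`.
-/

theorem eq_cexp_sub_mul_of_hasDerivAt {w g g' : ℝ → ℂ}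
    (hg : ∀ t, HasDerivAt g (g' t) t) (hw : ∀ t, HasDerivAt w (g' t * w t) t) (a b : ℝ) :
    w b = Complex.exp (g b - g a) * w a := by
  have hconst : ∀ t, HasDerivAt (fun s => Complex.exp (-g s) * w s) 0 t := fun t => by
    refine ((hg t).neg.cexp.mul (hw t)).congr_deriv ?_
    simp only [Pi.neg_apply]
    ring
  have hab := is_const_of_deriv_eq_zero (fun t => (hconst t).differentiableAt)
    (fun t => (hconst t).deriv) b a
  calc w b = Complex.exp (g b) * (Complex.exp (-g b) * w b) := by
        rw [← mul_assoc, ← Complex.exp_add, add_neg_cancel, Complex.exp_zero, one_mul]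
    _ = Complex.exp (g b - g a) * w a := by
        rw [hab, ← mul_assoc, ← Complex.exp_add, sub_eq_add_neg]

theorem floquet_multiplier_eq_cexp {f F : ℝ → ℝ} {u : ℝ → ℂ} {β : ℂ} {T : ℝ}
    (hf : ∀ t, f t ≠ 0) (hF : ∀ t, HasDerivAt F (f t)⁻¹ t)
    (hfu : ∀ t, HasDerivAt (fun s => (f s : ℂ) * u s) (-β * u t) t) (hT : f T = f 0) :
    u T = Complex.exp (-β * (F T - F 0 : ℝ)) * u 0 := by
  have hg : ∀ t, HasDerivAt (fun s => -β * F s) (-β * (f t : ℂ)⁻¹) t := fun t => by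
    simpa using (hF t).ofReal_comp.const_mul (-β)
  have hw : ∀ t, HasDerivAt (fun s => (f s : ℂ) * u s) (-β * (f t : ℂ)⁻¹ * (f t * u t)) t :=
    fun t => (hfu t).congr_deriv (by field_simp [hf t])
  have h := eq_cexp_sub_mul_of_hasDerivAt hg hw 0 T
  rw [hT, mul_left_comm, ← mul_sub, ← Complex.ofReal_sub] at h
  exact mul_left_cancel₀ (Complex.ofReal_ne_zero.2 (hf 0)) h

theorem hasDerivAt_of_mul_add_mul_deriv_eq_zero {u w : ℝ → ℂ} {a b : ℂ} (hb : b ≠ 0)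
    (hw : Differentiable ℝ w) (h : ∀ t, a * u t + b * deriv w t = 0) (t : ℝ) :
    HasDerivAt w (-(a / b) * u t) t := by
  refine (hw t).hasDerivAt.congr_deriv (mul_left_cancel₀ hb ?_)
  rw [← mul_assoc, mul_neg, mul_div_cancel₀ _ hb]
  linear_combination h t

theorem one_add_mul_cos_pos {ε : ℝ} (hε : |ε| < 1) (θ : ℝ) : 0 < 1 + ε * cos θ := by
  have h : |ε * cos θ| < 1 := by
    rw [abs_mul]
    nlinarith [abs_cos_le_one θ, abs_nonneg ε, abs_nonneg (cos θ)]
  linarith [neg_abs_le (ε * cos θ)]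

/-- The eccentric anomaly at true anomaly `θ` of a Kepler orbit of eccentricity `ε`. Unlike the
textbook `2 arctan (√((1 - ε)/(1 + ε)) tan (θ/2))`, this form is smooth on all of `ℝ`. -/
noncomputable def eccentricAnomaly (ε θ : ℝ) : ℝ :=
  θ - 2 * arctan (ε * sin θ / (1 + √(1 - ε ^ 2) + ε * cos θ))

theorem hasDerivAt_eccentricAnomaly {ε : ℝ} (hε : |ε| < 1) (θ : ℝ) :
    HasDerivAt (eccentricAnomaly ε) (√(1 - ε ^ 2) / (1 + ε * cos θ)) θ := by
  set s := √(1 - ε ^ 2)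
  have hs2 : s ^ 2 = 1 - ε ^ 2 := sq_sqrt (by nlinarith [sq_lt_one_iff_abs_lt_one ε |>.2 hε])
  have hf := one_add_mul_cos_pos hε θ
  have hD : 0 < 1 + s + ε * cos θ := by linarith [sqrt_nonneg (1 - ε ^ 2)]
  have hq := ((hasDerivAt_sin θ).const_mul ε).div
    (((hasDerivAt_cos θ).const_mul ε).const_add (1 + s)) hD.ne'
  refine ((hasDerivAt_id' θ).sub (((hasDerivAt_arctan _).comp θ hq).const_mul 2)).congr_deriv ?_
  simp only [Pi.div_apply]
  field_simp
  linear_combination (-(1 + s + ε * cos θ)) * (hs2 + ε ^ 2 * sin_sq_add_cos_sq θ)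

@[simp] theorem eccentricAnomaly_zero (ε : ℝ) : eccentricAnomaly ε 0 = 0 := by
  simp [eccentricAnomaly]

@[simp] theorem eccentricAnomaly_two_pi (ε : ℝ) : eccentricAnomaly ε (2 * π) = 2 * π := by
  simp [eccentricAnomaly]

theorem floquet_quasifrequency_cosine_modulation_general
    (ℓ v₀ vr δ Ω : ℝ) (hℓ : 0 < ℓ) (hvr : 0 < vr)
    (hδ : 0 < δ) (hΩ : 0 < Ω) (ε : ℝ) (hε0 : 0 ≤ ε) (hε1 : ε < 1)
    (c : ℝ → ℂ) (hc' : Differentiable ℝ (deriv c))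
    (hode : ∀ t : ℝ, (2 / (v₀ : ℂ)) * deriv c t
        + ((ℓ : ℂ) / ((δ : ℂ) * (vr : ℂ) ^ 2)) *
            deriv (fun s => deriv c s / ((1 / (1 + ε * Real.cos (Ω * s)) : ℝ) : ℂ)) t = 0) :
    deriv c (2 * π / Ω)
      = Complex.exp (-Complex.I * ((2 * π / Ω : ℝ) : ℂ) *
          ((-2 * Complex.I * (vr : ℂ) ^ 2 * (δ : ℂ) / ((ℓ : ℂ) * (v₀ : ℂ)))
            / ((Real.sqrt (1 - ε ^ 2) : ℝ) : ℂ))) * deriv c 0 := by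
  have hε : |ε| < 1 := abs_lt.2 ⟨by linarith, hε1⟩
  have hs : √(1 - ε ^ 2) ≠ 0 := (sqrt_pos.2 (by nlinarith)).ne'
  set f : ℝ → ℝ := fun t => 1 + ε * cos (Ω * t) with hf_def
  have hf : ∀ t, f t ≠ 0 := fun t => (one_add_mul_cos_pos hε _).ne'
  have hF : ∀ t, HasDerivAt (fun t => eccentricAnomaly ε (Ω * t) / (Ω * √(1 - ε ^ 2))) (f t)⁻¹ t :=
    fun t => (((hasDerivAt_eccentricAnomaly hε (Ω * t)).comp t
      ((hasDerivAt_id t).const_mul Ω)).div_const _).congr_deriv (by simp only [hf_def]; field_simp)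
  have hw : Differentiable ℝ (fun s => (f s : ℂ) * deriv c s) := by
    simp only [hf_def]
    fun_prop
  have hfun : (fun s => deriv c s / ((1 / (1 + ε * cos (Ω * s)) : ℝ) : ℂ))
      = fun s => (f s : ℂ) * deriv c s := by
    funext s
    rw [Complex.ofReal_div, Complex.ofReal_one, div_div_eq_mul_div, div_one, mul_comm]
  have hb : (ℓ : ℂ) / (δ * vr ^ 2) ≠ 0 := by
    have : ℓ / (δ * vr ^ 2) ≠ 0 := by positivity
    exact_mod_cast this
  rw [floquet_multiplier_eq_cexp hf hF (hasDerivAt_of_mul_add_mul_deriv_eq_zero hb hw (hfun ▸ hode))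
    (by simp [hf_def, mul_div_cancel₀ _ hΩ.ne'])]
  simp only [mul_div_cancel₀ _ hΩ.ne', mul_zero, eccentricAnomaly_two_pi, eccentricAnomaly_zero,
    zero_div, sub_zero]
  congr 2
  push_cast
  rw [div_div_eq_mul_div]
  ring_nf
  rw [Complex.I_sq]
  ring

/-- **Floquet quasifrequency with cosine modulation.**
For `κ(t) = 1/(1 + ε·cos(Ωt))` and the capacitance ODE
`(2/v₀)·c'(t) + (ℓ/(δ·v_r²))·(d/dt)(c'(t)/κ(t)) = 0`, the Floquet multiplier over one
period `T = 2π/Ω` is `exp(−i·T·𝒦/√(1 − ε²))` with `𝒦 = −2i·v_r²·δ/(ℓ·v₀)`. -/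
theorem floquet_quasifrequency_cosine_modulation
    (ℓ v₀ vr δ Ω : ℝ) (hℓ : 0 < ℓ) (hv₀ : 0 < v₀) (hvr : 0 < vr)
    (hδ : 0 < δ) (hΩ : 0 < Ω) (ε : ℝ) (hε0 : 0 ≤ ε) (hε1 : ε < 1)
    (c : ℝ → ℂ) (hc : Differentiable ℝ c) (hc' : Differentiable ℝ (deriv c))
    (hode : ∀ t : ℝ, (2 / (v₀ : ℂ)) * deriv c t
        + ((ℓ : ℂ) / ((δ : ℂ) * (vr : ℂ) ^ 2)) *
            deriv (fun s => deriv c s / ((1 / (1 + ε * Real.cos (Ω * s)) : ℝ) : ℂ)) t = 0) :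
    deriv c (2 * π / Ω)
      = Complex.exp (-Complex.I * ((2 * π / Ω : ℝ) : ℂ) *
          ((-2 * Complex.I * (vr : ℂ) ^ 2 * (δ : ℂ) / ((ℓ : ℂ) * (v₀ : ℂ)))
            / ((Real.sqrt (1 - ε ^ 2) : ℝ) : ℂ))) * deriv c 0 :=
  floquet_quasifrequency_cosine_modulation_general ℓ v₀ vr δ Ω hℓ hvr hδ hΩ ε hε0 hε1 c hc' hode
end

section
/- Let N ≥ 2 and let x₁⁻ < x₁⁺ < x₂⁻ < x₂⁺ < ⋯ < x_N⁻ < x_N⁺ be real numbers, and set ℓ_{i(i+1)} := x_{i+1}⁻ − x_i⁺ for 1 ≤ i ≤ N − 1. For 1 ≤ j ≤ N define V_j : ℝ → ℝ by: V_j(x) = δ_{ij} (Kronecker delta) for x ∈ [x_i⁻, x_i⁺], 1 ≤ i ≤ N; V_j affine on each gap [x_i⁺, x_{i+1}⁻] with V_j(x_i⁺) = δ_{ij} and V_j(x_{i+1}⁻) = δ_{(i+1)j}; V_j(x) = δ_{1j} for x ≤ x₁⁻ and V_j(x) = δ_{Nj} for x ≥ x_N⁺. Then the capacitance matrix C with entries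 C_{ij} := V_j'|₋(x_i⁻) − V_j'|₊(x_i⁺) (one-sided derivatives) is the symmetric tridiagonal matrix with C_{i,i+1} = C_{i+1,i} = −1/ℓ_{i(i+1)} for 1 ≤ i ≤ N − 1, C_{ij} = 0 for |i − j| ≥ 2, and diagonal entries C_{11} = 1/ℓ_{12}, C_{NN} = 1/ℓ_{(N−1)N}, and C_{ii} = 1/ℓ_{(i−1)i} + 1/ℓ_{i(i+1)} for 1 < i < N. -/
open Set Filter

lemma capderiv_affine_left {f : ℝ → ℝ} {a b c m : ℝ} (hab : a < b)
    (hf : ∀ x ∈ Set.Icc a b, f x = c + m * (x - a) / (b - a)) :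
    derivWithin f (Set.Iio b) b = m / (b - a) := by
  have hev : f =ᶠ[nhdsWithin b (Set.Iio b)] fun x => c + m * (x - a) / (b - a) := by
    have h1 : ∀ᶠ x in nhdsWithin b (Set.Iio b), x ∈ Set.Ioi a :=
      eventually_nhdsWithin_of_eventually_nhds (Ioi_mem_nhds hab)
    filter_upwards [h1, self_mem_nhdsWithin] with x hx1 hx2
    exact hf x ⟨le_of_lt hx1, le_of_lt hx2⟩
  rw [hev.derivWithin_eq (hf b ⟨le_of_lt hab, le_refl b⟩)]
  have hg : HasDerivAt (fun x => c + m * (x - a) / (b - a)) (m / (b - a)) b := by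
    simpa using ((((hasDerivAt_id b).sub_const a).const_mul m).div_const (b - a)).const_add c
  exact hg.hasDerivWithinAt.derivWithin (uniqueDiffWithinAt_Iio b)

lemma capderiv_affine_right {f : ℝ → ℝ} {a b c m : ℝ} (hab : a < b)
    (hf : ∀ x ∈ Set.Icc a b, f x = c + m * (x - a) / (b - a)) :
    derivWithin f (Set.Ioi a) a = m / (b - a) := by
  have hev : f =ᶠ[nhdsWithin a (Set.Ioi a)] fun x => c + m * (x - a) / (b - a) := by
    have h1 : ∀ᶠ x in nhdsWithin a (Set.Ioi a), x ∈ Set.Iio b :=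
      eventually_nhdsWithin_of_eventually_nhds (Iio_mem_nhds hab)
    filter_upwards [h1, self_mem_nhdsWithin] with x hx1 hx2
    exact hf x ⟨le_of_lt hx2, le_of_lt hx1⟩
  rw [hev.derivWithin_eq (hf a ⟨le_refl a, le_of_lt hab⟩)]
  have hg : HasDerivAt (fun x => c + m * (x - a) / (b - a)) (m / (b - a)) a := by
    simpa using ((((hasDerivAt_id a).sub_const a).const_mul m).div_const (b - a)).const_add c
  exact hg.hasDerivWithinAt.derivWithin (uniqueDiffWithinAt_Ioi a)

lemma capderiv_const_left {f : ℝ → ℝ} {b c : ℝ} (hf : ∀ x ≤ b, f x = c) :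
    derivWithin f (Set.Iio b) b = 0 := by
  have hev : f =ᶠ[nhdsWithin b (Set.Iio b)] fun _ => c := by
    filter_upwards [self_mem_nhdsWithin] with x hx
    exact hf x (le_of_lt hx)
  rw [hev.derivWithin_eq (hf b le_rfl)]
  exact (hasDerivAt_const b c).hasDerivWithinAt.derivWithin (uniqueDiffWithinAt_Iio b)

lemma capderiv_const_right {f : ℝ → ℝ} {a c : ℝ} (hf : ∀ x, a ≤ x → f x = c) :
    derivWithin f (Set.Ioi a) a = 0 := by
  have hev : f =ᶠ[nhdsWithin a (Set.Ioi a)] fun _ => c := by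
    filter_upwards [self_mem_nhdsWithin] with x hx
    exact hf x (le_of_lt hx)
  rw [hev.derivWithin_eq (hf a le_rfl)]
  exact (hasDerivAt_const a c).hasDerivWithinAt.derivWithin (uniqueDiffWithinAt_Ioi a)


/-- **The one-dimensional capacitance matrix is tridiagonal.**
For `N ≥ 2` resonators `(x_i⁻, x_i⁺)` (indexed `0, …, N−1`), the functions `V_j`
equal to the Kronecker delta `δ_{ij}` on each resonator, affine on each gap, and
constant on the two exterior rays, yield the capacitance matrix
`C_{ij} = V_j'|₋(x_i⁻) − V_j'|₊(x_i⁺)` which is symmetric tridiagonal: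
off-diagonal entries `−1/ℓ_{i(i+1)}`, zero for `|i−j| ≥ 2`, and diagonal entries
`1/ℓ_{12}`, `1/ℓ_{(i−1)i} + 1/ℓ_{i(i+1)}`, `1/ℓ_{(N−1)N}`. -/
theorem capacitance_matrix_tridiagonal
    (N : ℕ) (hN : 2 ≤ N) (xm xp : ℕ → ℝ)
    (hord1 : ∀ i < N, xm i < xp i)
    (hord2 : ∀ i, i + 1 < N → xp i < xm (i + 1))
    (V : ℕ → ℝ → ℝ)
    (hres : ∀ j < N, ∀ i < N, ∀ x ∈ Set.Icc (xm i) (xp i),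
        V j x = if i = j then (1 : ℝ) else 0)
    (hgap : ∀ j < N, ∀ i, i + 1 < N → ∀ x ∈ Set.Icc (xp i) (xm (i + 1)),
        V j x = (if i = j then (1 : ℝ) else 0)
          + ((if i + 1 = j then (1 : ℝ) else 0) - if i = j then (1 : ℝ) else 0)
              * (x - xp i) / (xm (i + 1) - xp i))
    (hleft : ∀ j < N, ∀ x ≤ xm 0, V j x = if 0 = j then (1 : ℝ) else 0)
    (hright : ∀ j < N, ∀ x, xp (N - 1) ≤ x → V j x = if N - 1 = j then (1 : ℝ) else 0) :
    ∀ i < N, ∀ j < N,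
      derivWithin (V j) (Set.Iio (xm i)) (xm i) - derivWithin (V j) (Set.Ioi (xp i)) (xp i)
        = if i = j then
            (if i = 0 then 0 else 1 / (xm i - xp (i - 1)))
              + (if i = N - 1 then 0 else 1 / (xm (i + 1) - xp i))
          else if j = i + 1 then -(1 / (xm (i + 1) - xp i))
          else if i = j + 1 then -(1 / (xm i - xp (i - 1)))
          else 0 := by
  intro i hi j hj
  have hL : derivWithin (V j) (Set.Iio (xm i)) (xm i) =
      if i = 0 then 0 else
        ((if i = j then (1:ℝ) else 0) - (if i - 1 = j then 1 else 0)) / (xm i - xp (i - 1)) := by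
    rcases Nat.eq_zero_or_pos i with h0 | h0
    · subst h0
      simp only [if_pos rfl]
      exact capderiv_const_left (fun x hx => hleft j hj x hx)
    · have hi1 : i - 1 + 1 = i := by omega
      have hlt : i - 1 + 1 < N := by omega
      have hab : xp (i - 1) < xm i := by
        have := hord2 (i - 1) hlt; rwa [hi1] at this
      rw [if_neg (by omega)]
      have key : ∀ x ∈ Set.Icc (xp (i - 1)) (xm i),
          V j x = (if i - 1 = j then (1:ℝ) else 0)
            + ((if i = j then (1:ℝ) else 0) - (if i - 1 = j then 1 else 0))
              * (x - xp (i - 1)) / (xm i - xp (i - 1)) := by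
        intro x hx
        have := hgap j hj (i - 1) hlt x (by rwa [hi1])
        rw [hi1] at this
        exact this
      exact capderiv_affine_left hab key
  have hR : derivWithin (V j) (Set.Ioi (xp i)) (xp i) =
      if i = N - 1 then 0 else
        ((if i + 1 = j then (1:ℝ) else 0) - (if i = j then 1 else 0)) / (xm (i + 1) - xp i) := by
    by_cases hlast : i = N - 1
    · subst hlast
      simp only [if_pos rfl]
      exact capderiv_const_right (fun x hx => hright j hj x hx)
    · have hlt : i + 1 < N := by omega
      have hab : xp i < xm (i + 1) := hord2 i hlt
      rw [if_neg hlast]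
      exact capderiv_affine_right hab (hgap j hj i hlt)
  rw [hL, hR]
  have hprev : i ≠ 0 → (0:ℝ) < xm i - xp (i - 1) := by
    intro h
    have hi1 : i - 1 + 1 = i := by omega
    have := hord2 (i - 1) (by omega)
    rw [hi1] at this
    linarith
  have hnext : i ≠ N - 1 → (0:ℝ) < xm (i + 1) - xp i := by
    intro h
    have := hord2 i (by omega)
    linarith
  by_cases hij : i = j
  · subst hij
    rw [if_pos rfl]
    rw [if_pos rfl, if_neg (show i + 1 ≠ i by omega)]
    by_cases h0 : i = 0
    · rw [if_pos h0, if_pos h0]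
      by_cases hN1 : i = N - 1
      · rw [if_pos hN1, if_pos hN1]; ring
      · rw [if_neg hN1, if_neg hN1]; ring
    · rw [if_neg h0, if_neg h0, if_neg (show i - 1 ≠ i by omega)]
      by_cases hN1 : i = N - 1
      · rw [if_pos hN1, if_pos hN1]; ring
      · rw [if_neg hN1, if_neg hN1]; ring
  · rw [if_neg hij]
    by_cases hji1 : j = i + 1
    · rw [if_pos hji1]
      have hlast : i ≠ N - 1 := by omega
      rw [if_neg hlast, if_neg hij, if_neg (show i - 1 ≠ j by omega), if_pos hji1.symm]
      split_ifs <;> ring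
    · rw [if_neg hji1]
      by_cases hij1 : i = j + 1
      · rw [if_pos hij1]
        rw [if_neg (show i ≠ 0 by omega), if_neg hij, if_pos (show i - 1 = j by omega),
          if_neg (show i + 1 ≠ j by omega)]
        split_ifs <;> ring
      · rw [if_neg hij1]
        rw [if_neg hij, if_neg (show i - 1 ≠ j by omega), if_neg (show i + 1 ≠ j by omega)]
        split_ifs <;> ring
end
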